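/- arXiv:2010.01344 — 4 statements merged into one kernel-verified Lean document; each statement's English description precedes it below -/
import Mathlib

section
/- The polygon MBR code satisfies the data collection property: if C(n,2) code symbols of an MDS code with dimension B = k(n-1) - C(k,2) are placed on the edges of K_n, then the symbols stored on any k nodes (i.e., edges incident to any k vertices) suffice to determine the entire file, since they include at least B distinct code symbols of the MDS code. -/
/-!
The edges of `K_n` avoiding `k` given vertices are the 2-subsets of the other `n - k` vertices,
so the edges incident to them number `C(n,2) - C(n-k,2) = k(n-1) - C(k,2) = B`, and the MDS
property applies to these coordinates.
-/

open Finset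

theorem Nat.choose_two_add (k m : ℕ) :
    (k + m).choose 2 = k.choose 2 + k * m + m.choose 2 := by
  rw [Nat.add_choose_eq, Finset.Nat.sum_antidiagonal_succ, Finset.Nat.sum_antidiagonal_succ,
    Finset.Nat.antidiagonal_zero, Finset.sum_singleton]
  simp only [zero_add, Nat.choose_zero_right, Nat.choose_one_right]
  ring

theorem Nat.choose_two_add_choose_two_self (k : ℕ) : k.choose 2 + k.choose 2 = k * (k - 1) := by
  rw [Nat.choose_two_right]
  have := (Nat.even_mul_pred_self k).two_dvd
  omega

theorem Nat.mul_sub_one_sub_choose_two_add_choose_two {k n : ℕ} (hkn : k ≤ n) :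
    k * (n - 1) - k.choose 2 + (n - k).choose 2 = n.choose 2 := by
  obtain ⟨m, rfl⟩ := Nat.exists_eq_add_of_le hkn
  have hsplit : k * (k + m - 1) = k * (k - 1) + k * m := by
    rcases k with _ | k
    · simp
    · rw [← mul_add]; congr 1; omega
  rw [Nat.add_sub_cancel_left, Nat.choose_two_add, hsplit, ← Nat.choose_two_add_choose_two_self]
  omega

theorem card_filter_exists_mem_add_choose {α : Type*} [Fintype α] [DecidableEq α]
    (S : Finset α) (r : ℕ) :
    #{e : {e : Finset α // e.card = r} | ∃ v ∈ S, v ∈ e.1} + (Fintype.card α - #S).choose r =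
      (Fintype.card α).choose r := by
  have hdisjoint : #{e : {e : Finset α // e.card = r} | ¬ ∃ v ∈ S, v ∈ e.1} =
      (Fintype.card α - #S).choose r := by
    rw [← card_compl, ← card_powersetCard]
    refine card_bij (fun e _ => e.1) ?_ (fun _ _ _ _ => Subtype.ext) ?_
    · intro e he
      simp only [mem_filter, mem_univ, true_and, not_exists, not_and] at he
      exact mem_powersetCard.2 ⟨fun v hv => mem_compl.2 fun hvS => he v hvS hv, e.2⟩
    · intro t ht
      obtain ⟨hsub, hcard⟩ := mem_powersetCard.1 ht
      refine ⟨⟨t, hcard⟩, ?_, rfl⟩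
      simp only [mem_filter, mem_univ, true_and, not_exists, not_and]
      exact fun v hvS hv => mem_compl.1 (hsub hv) hvS
  rw [← hdisjoint, card_filter_add_card_filter_not, card_univ, Fintype.card_finset_len]

theorem stmt_7_general (n k : ℕ) (F : Type*)
    (B : ℕ) (hB : B = k * (n - 1) - Nat.choose k 2)
    (C : Set ({e : Finset (Fin n) // e.card = 2} → F))
    -- MDS property: any B coordinates determine the codeword
    (hMDS : ∀ T : Finset {e : Finset (Fin n) // e.card = 2}, B ≤ T.card →
        ∀ c ∈ C, ∀ c' ∈ C, (∀ e ∈ T, c e = c' e) → c = c') :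
    ∀ S : Finset (Fin n), S.card = k →
      ∀ c ∈ C, ∀ c' ∈ C,
        (∀ e : {e : Finset (Fin n) // e.card = 2},
            (∃ v ∈ S, v ∈ e.1) → c e = c' e) → c = c' := by
  intro S hS c hc c' hc' hagree
  have hkn : k ≤ n := by simpa [hS] using card_le_univ S
  have hcount := card_filter_exists_mem_add_choose S 2
  rw [Fintype.card_fin, hS, ← Nat.mul_sub_one_sub_choose_two_add_choose_two hkn, ← hB] at hcount
  exact hMDS _ (Nat.add_right_cancel hcount).ge c hc c' hc' fun e he => hagree e (by simpa using he)

/-- Data collection for the polygon MBR code: the `C(n,2)` symbols of an MDS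
code of dimension `B = k(n-1) - C(k,2)` are placed on the edges of `K_n`
(2-element subsets of vertices); since any `B` coordinates of the MDS code
determine the codeword, the symbols on the edges incident to any `k` vertices
determine the entire codeword. -/
theorem stmt_7 (n k : ℕ) (hkn : k ≤ n) (F : Type*) [Field F] [DecidableEq F]
    (B : ℕ) (hB : B = k * (n - 1) - Nat.choose k 2)
    (C : Set ({e : Finset (Fin n) // e.card = 2} → F))
    -- MDS property: any B coordinates determine the codeword
    (hMDS : ∀ T : Finset {e : Finset (Fin n) // e.card = 2}, B ≤ T.card →
        ∀ c ∈ C, ∀ c' ∈ C, (∀ e ∈ T, c e = c' e) → c = c') :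
    ∀ S : Finset (Fin n), S.card = k →
      ∀ c ∈ C, ∀ c' ∈ C,
        (∀ e : {e : Finset (Fin n) // e.card = 2},
            (∃ v ∈ S, v ∈ e.1) → c e = c' e) → c = c' :=
  stmt_7_general n k F B hB C hMDS
end

section
/- The minimum distance of an (n,k,r) locally recoverable code satisfies d_min ≤ n - k + 1 - (⌈k/r⌉ - 1). -/
/-!
Greedy shortening. Let `C.vanishingOn A` be the subcode of codewords vanishing on the coordinate
set `A`. Imposing `t` further zeros costs at most `t` dimensions, so `finrank + #A` never decreases
as `A` grows. While the dimension `d` exceeds `r`, pick a coordinate `i` on which some codeword of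
the current subcode is nonzero and add `i` together with its repair group `S`: the zeros on `S`
force the zero at `i`, so the dimension drops by at least one and at most `#S ≤ r`, while one more
coordinate is gained than dimension is lost. Once `d ≤ r`, add single coordinates until `d = 1`.
Starting from `d = k` this gives a set `B` with `#B ≥ (k - 1) + (k - 1) / r` on which a nonzero
codeword vanishes, and `(k - 1) / r = ⌈k / r⌉ - 1`.
-/

open Finset Module

theorem Nat.ceil_div_sub_one_le {K : Type*} [Field K] [LinearOrder K] [IsStrictOrderedRing K]
    [FloorSemiring K] (k r : ℕ) : ⌈(k : K) / r⌉₊ - 1 ≤ (k - 1) / r := by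
  rcases Nat.eq_zero_or_pos r with rfl | hr
  · simp
  have hk : k ≤ r * ((k - 1) / r + 1) := Nat.le_of_pred_lt (Nat.lt_mul_div_succ _ hr)
  have hceil : ⌈(k : K) / r⌉₊ ≤ (k - 1) / r + 1 := by
    rw [Nat.ceil_le, div_le_iff₀ (by exact_mod_cast hr), mul_comm]
    exact_mod_cast hk
  exact Nat.sub_le_iff_le_add.2 hceil

theorem Submodule.finrank_le_finrank_inf_ker_add {K V W : Type*} [Field K] [AddCommGroup V] [Module K V]
    [AddCommGroup W] [Module K W] [FiniteDimensional K V] [FiniteDimensional K W]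
    (P : Submodule K V) (f : V →ₗ[K] W) :
    finrank K P ≤ finrank K ↥(P ⊓ LinearMap.ker f) + finrank K W := by
  have hsup := Submodule.finrank_sup_add_finrank_inf_eq P (LinearMap.ker f)
  have hnullity := LinearMap.finrank_range_add_finrank_ker f
  have hsup_le := Submodule.finrank_le (P ⊔ LinearMap.ker f)
  have hrange_le := Submodule.finrank_le (LinearMap.range f)
  omega

namespace Submodule

variable {F ι : Type*} [Field F]

def vanishingOn (C : Submodule F (ι → F)) (A : Finset ι) : Submodule F (ι → F) :=
  C ⊓ LinearMap.ker (LinearMap.funLeft F F ((↑) : A → ι))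

def IsLocallyRecoverable (C : Submodule F (ι → F)) (r : ℕ) : Prop :=
  ∀ i, ∃ S : Finset ι, i ∉ S ∧ #S ≤ r ∧ ∃ a : ι → F, ∀ c ∈ C, c i = ∑ j ∈ S, a j * c j

variable {C : Submodule F (ι → F)} {A B : Finset ι} {c : ι → F}

theorem mem_vanishingOn : c ∈ C.vanishingOn A ↔ c ∈ C ∧ ∀ i ∈ A, c i = 0 := by
  simp [vanishingOn, funext_iff]

theorem vanishingOn_anti (h : A ⊆ B) : C.vanishingOn B ≤ C.vanishingOn A := fun _ hc =>
  mem_vanishingOn.2 ⟨(mem_vanishingOn.1 hc).1, fun i hi => (mem_vanishingOn.1 hc).2 i (h hi)⟩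

@[simp]
theorem vanishingOn_empty : C.vanishingOn ∅ = C := by
  ext c
  simp [mem_vanishingOn]

theorem finrank_le_finrank_vanishingOn_add_card [Finite ι] (C : Submodule F (ι → F))
    (A : Finset ι) : finrank F C ≤ finrank F (C.vanishingOn A) + #A := by
  have h := finrank_le_finrank_inf_ker_add C (LinearMap.funLeft F F ((↑) : A → ι))
  rwa [finrank_fintype_fun_eq_card, Fintype.card_coe] at h

theorem exists_apply_ne_zero_of_finrank_pos (h : 0 < finrank F (C.vanishingOn A)) :
    ∃ c ∈ C.vanishingOn A, ∃ i, c i ≠ 0 := by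
  have := Module.nontrivial_of_finrank_pos h
  obtain ⟨⟨c, hc⟩, hc0⟩ := exists_ne (0 : C.vanishingOn A)
  exact ⟨c, hc, Function.ne_iff.1 fun h => hc0 (Subtype.ext h)⟩

theorem finrank_vanishingOn_lt [Finite ι] {i : ι} (hAB : A ⊆ B) (hc : c ∈ C.vanishingOn A)
    (hiB : i ∈ B) (hci : c i ≠ 0) :
    finrank F (C.vanishingOn B) < finrank F (C.vanishingOn A) :=
  Submodule.finrank_lt_finrank_of_lt <| SetLike.lt_iff_le_and_exists.2
    ⟨vanishingOn_anti hAB, c, hc, fun hcB => hci ((mem_vanishingOn.1 hcB).2 i hiB)⟩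

variable [DecidableEq ι]

theorem vanishingOn_vanishingOn : (C.vanishingOn A).vanishingOn B = C.vanishingOn (A ∪ B) := by
  ext c
  simp only [mem_vanishingOn, mem_union]
  grind

theorem vanishingOn_insert_eq {S : Finset ι} {i : ι} {a : ι → F} (hS : S ⊆ A)
    (hrep : ∀ c ∈ C, c i = ∑ j ∈ S, a j * c j) :
    C.vanishingOn (insert i A) = C.vanishingOn A := by
  refine le_antisymm (vanishingOn_anti (subset_insert i A)) fun c hc => ?_
  obtain ⟨hcC, hcA⟩ := mem_vanishingOn.1 hc
  refine mem_vanishingOn.2 ⟨hcC, fun j hj => ?_⟩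
  rcases mem_insert.1 hj with rfl | hj
  · rw [hrep c hcC]
    exact sum_eq_zero fun l hl => by rw [hcA l (hS hl), mul_zero]
  · exact hcA j hj

theorem finrank_vanishingOn_add_card_le [Finite ι] (h : A ⊆ B) :
    finrank F (C.vanishingOn A) + #A ≤ finrank F (C.vanishingOn B) + #B := by
  have key := finrank_le_finrank_vanishingOn_add_card (C.vanishingOn A) (B \ A)
  rw [vanishingOn_vanishingOn, union_sdiff_of_subset h, card_sdiff_of_subset h] at key
  have := card_le_card h
  omega

theorem card_filter_ne_zero_le [Fintype ι] [DecidableEq F] (hc : c ∈ C.vanishingOn B) :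
    #{i | c i ≠ 0} ≤ Fintype.card ι - #B := by
  rw [← card_compl]
  exact card_le_card fun i hi => mem_compl.2 fun hiB =>
    (mem_filter.1 hi).2 ((mem_vanishingOn.1 hc).2 i hiB)

variable [Finite ι]

theorem exists_finrank_vanishingOn_insert_add_one (h : 0 < finrank F (C.vanishingOn A)) :
    ∃ i ∉ A, finrank F (C.vanishingOn (insert i A)) + 1 = finrank F (C.vanishingOn A) := by
  obtain ⟨c, hc, i, hci⟩ := exists_apply_ne_zero_of_finrank_pos h
  have hiA : i ∉ A := fun hi => hci ((mem_vanishingOn.1 hc).2 i hi)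
  have hlt := finrank_vanishingOn_lt (subset_insert i A) hc (mem_insert_self i A) hci
  have hle := finrank_vanishingOn_add_card_le (C := C) (subset_insert i A)
  rw [card_insert_of_notMem hiA] at hle
  exact ⟨i, hiA, by omega⟩

namespace IsLocallyRecoverable

variable {r : ℕ}

theorem exists_finrank_vanishingOn_lt (hC : C.IsLocallyRecoverable r)
    (h : 0 < finrank F (C.vanishingOn A)) :
    ∃ B, finrank F (C.vanishingOn B) < finrank F (C.vanishingOn A) ∧
      finrank F (C.vanishingOn A) + #A + 1 ≤ finrank F (C.vanishingOn B) + #B ∧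
      #B ≤ #A + r + 1 := by
  obtain ⟨c, hc, i, hci⟩ := exists_apply_ne_zero_of_finrank_pos h
  obtain ⟨S, hiS, hSr, a, hrep⟩ := hC i
  have hiAS : i ∉ A ∪ S := by
    rw [mem_union, not_or]
    exact ⟨fun hi => hci ((mem_vanishingOn.1 hc).2 i hi), hiS⟩
  have hAB : A ⊆ insert i (A ∪ S) := subset_union_left.trans (subset_insert _ _)
  refine ⟨insert i (A ∪ S), finrank_vanishingOn_lt hAB hc (mem_insert_self _ _) hci, ?_, ?_⟩
  · rw [vanishingOn_insert_eq subset_union_right hrep, card_insert_of_notMem hiAS]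
    have := finrank_vanishingOn_add_card_le (C := C) (subset_union_left : A ⊆ A ∪ S)
    omega
  · rw [card_insert_of_notMem hiAS]
    have := card_union_le A S
    omega

theorem exists_finrank_vanishingOn_eq_one (hC : C.IsLocallyRecoverable r) (A : Finset ι)
    (hA : 0 < finrank F (C.vanishingOn A)) :
    ∃ B, finrank F (C.vanishingOn B) = 1 ∧
      #A + (finrank F (C.vanishingOn A) - 1) + (finrank F (C.vanishingOn A) - 1) / r ≤ #B := by
  generalize hd : finrank F (C.vanishingOn A) = d at hA ⊢
  induction d using Nat.strong_induction_on generalizing A with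
  | _ d ih =>
  rcases (show d = 1 ∨ (1 < d ∧ d ≤ r) ∨ r < d by omega) with rfl | ⟨hd1, hdr⟩ | hrd
  · exact ⟨A, hd, by simp⟩
  · obtain ⟨i, hiA, hi⟩ := exists_finrank_vanishingOn_insert_add_one (hd ▸ hA)
    obtain ⟨B, hB, hcard⟩ := ih _ (by omega) (insert i A) rfl (by omega)
    rw [card_insert_of_notMem hiA] at hcard
    rw [Nat.div_eq_of_lt (by omega : d - 1 < r)]
    exact ⟨B, hB, le_trans (by omega) (le_trans (Nat.le_add_right _ _) hcard)⟩
  · obtain ⟨B', hlt, hgain, hcard'⟩ := hC.exists_finrank_vanishingOn_lt (hd ▸ hA)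
    obtain ⟨B, hB, hcard⟩ := ih _ (by omega) B' rfl (by omega)
    have hdiv : (d - 1) / r ≤ (finrank F (C.vanishingOn B') - 1) / r + 1 := by
      rw [← Nat.add_div_right _ (by omega : 0 < r)]
      exact Nat.div_le_div_right (by omega)
    exact ⟨B, hB, by omega⟩

end IsLocallyRecoverable

end Submodule

open Submodule in
theorem stmt_10_general (F : Type*) [Field F] [DecidableEq F] (n k r : ℕ)
    (hk : 0 < k)
    (C : Submodule F (Fin n → F)) (hdim : Module.finrank F C = k)
    (hloc : ∀ i : Fin n, ∃ S : Finset (Fin n), i ∉ S ∧ S.card ≤ r ∧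
        ∃ a : Fin n → F, ∀ c ∈ C, c i = ∑ j ∈ S, a j * c j) :
    ∃ c ∈ C, c ≠ 0 ∧
      (univ.filter fun i : Fin n => c i ≠ 0).card
        ≤ n - k + 1 - (⌈(k : ℚ) / r⌉₊ - 1) := by
  have hC : C.IsLocallyRecoverable r := hloc
  obtain ⟨B, hB, hcard⟩ := hC.exists_finrank_vanishingOn_eq_one ∅ (by rwa [vanishingOn_empty, hdim])
  obtain ⟨c, hc, i, hci⟩ := exists_apply_ne_zero_of_finrank_pos (hB ▸ zero_lt_one)
  refine ⟨c, (mem_vanishingOn.1 hc).1, fun h => hci (by simp [h]), ?_⟩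
  have hweight := card_filter_ne_zero_le hc
  have hceil := Nat.ceil_div_sub_one_le (K := ℚ) k r
  rw [vanishingOn_empty, hdim, card_empty] at hcard
  rw [Fintype.card_fin] at hweight
  have hBn : #B ≤ n := by simpa using card_le_univ B
  omega

/-- The Gopalan–Huang–Simitci–Yekhanin bound: an `(n,k,r)` locally recoverable
code (every code symbol is a linear combination of at most `r` others) has
minimum distance at most `n - k + 1 - (⌈k/r⌉ - 1)`, i.e. there is a nonzero
codeword of Hamming weight at most that quantity. -/
theorem stmt_10 (F : Type*) [Field F] [DecidableEq F] (n k r : ℕ)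
    (hk : 0 < k) (hr : 0 < r)
    (C : Submodule F (Fin n → F)) (hdim : Module.finrank F C = k)
    (hloc : ∀ i : Fin n, ∃ S : Finset (Fin n), i ∉ S ∧ S.card ≤ r ∧
        ∃ a : Fin n → F, ∀ c ∈ C, c i = ∑ j ∈ S, a j * c j) :
    ∃ c ∈ C, c ≠ 0 ∧
      (univ.filter fun i : Fin n => c i ≠ 0).card
        ≤ n - k + 1 - (⌈(k : ℚ) / r⌉₊ - 1) :=
  stmt_10_general F n k r hk C hdim hloc
end

section
/- In the Tamo–Barg construction with (r+1) | (q-1) and n = q-1: if H is the group of (r+1)-th roots of unity in F_q^*, b ∈ F_q^*, β ∈ H, and f(x) = Σ_{i=0}^{ℓ} x^{(r+1)i} f_i(x) with deg f_i ≤ r-1, then f(bβ) = g(bβ) where g(x) = Σ_{i=0}^{ℓ} b^{(r+1)i} f_i(x) is a polynomial of degree ≤ r-1; consequently f(bβ) is determined by the r values {f(bθ) : θ ∈ H, θ ≠ β}. -/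
open Finset Polynomial

/-!
At a point `x = bβ` with `β ^ (r+1) = 1` we have `x ^ (r+1) = b ^ (r+1)`, so each monomial
`X ^ ((r+1) i)` of `f` evaluates at `x` to the constant `b ^ ((r+1) i)`: on the coset `bH` the
polynomial `f` agrees with `g = Σ b^{(r+1)i} f_i`, of degree `≤ r-1`. Since `H` has exactly `r+1`
elements when `(r+1) ∣ q-1`, the coset minus `bβ` still has `r` points, which determine any
polynomial of degree `< r`.
-/

theorem Polynomial.eval_sum_X_pow_mul_eq_of_pow_eq {R ι : Type*} [CommRing R] (s : Finset ι)
    (e : ι → ℕ) (p : ι → R[X]) {n : ℕ} {x y : R} (hxy : x ^ n = y ^ n) :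
    (∑ i ∈ s, X ^ (n * e i) * p i).eval x = (∑ i ∈ s, C (y ^ (n * e i)) * p i).eval x := by
  simp only [eval_finsetSum, eval_mul, eval_pow, eval_X, eval_C, pow_mul, hxy]

theorem Polynomial.degree_sum_C_mul_le {R ι : Type*} [CommRing R] (s : Finset ι) (c : ι → R)
    {p : ι → R[X]} {d : ℕ} (hp : ∀ i ∈ s, (p i).degree ≤ d) :
    (∑ i ∈ s, C (c i) * p i).degree ≤ d := by
  simp only [← mem_degreeLE, ← smul_eq_C_mul] at hp ⊢
  exact Submodule.sum_mem _ fun i hi => Submodule.smul_mem _ _ (hp i hi)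

theorem FiniteField.exists_isPrimitiveRoot_of_dvd_card_sub_one {F : Type*} [Field F] [Fintype F]
    {n : ℕ} (hdvd : n ∣ Fintype.card F - 1) : ∃ ζ : F, IsPrimitiveRoot ζ n := by
  classical
  obtain ⟨g, hg⟩ := IsCyclic.exists_ofOrder_eq_natCard (α := Fˣ)
  rw [Nat.card_eq_fintype_card, Fintype.card_units] at hg
  obtain ⟨k, hk⟩ := hdvd
  have hζ := (hg ▸ IsPrimitiveRoot.orderOf g).pow (hg ▸ orderOf_pos g) (hk.trans (mul_comm _ _))
  exact ⟨_, by simpa only [Units.val_pow_eq_pow_val] using IsPrimitiveRoot.coe_units_iff.mpr hζ⟩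

theorem Polynomial.eq_of_degree_lt_of_eval_mul_rootsOfUnity_ne {R : Type*} [CommRing R]
    [IsDomain R] {n : ℕ} {ζ : R} (hζ : IsPrimitiveRoot ζ (n + 1)) {b β : R} (hb : b ≠ 0)
    (hβ : β ^ (n + 1) = 1) {p q : R[X]} (hp : p.degree < n) (hq : q.degree < n)
    (hpq : ∀ θ, θ ^ (n + 1) = 1 → θ ≠ β → p.eval (b * θ) = q.eval (b * θ)) : p = q := by
  classical
  have hmem (θ : R) : θ ∈ nthRootsFinset (n + 1) (1 : R) ↔ θ ^ (n + 1) = 1 :=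
    mem_nthRootsFinset n.succ_pos 1
  have hcard : #((nthRootsFinset (n + 1) (1 : R)).erase β) = n := by
    rw [card_erase_of_mem ((hmem β).2 hβ), hζ.card_nthRootsFinset, Nat.add_sub_cancel]
  refine eq_of_degrees_lt_of_eval_index_eq (v := (b * ·)) _ (mul_right_injective₀ hb).injOn
    (by rwa [hcard]) (by rwa [hcard]) fun θ hθ => ?_
  exact hpq θ ((hmem θ).1 (mem_of_mem_erase hθ)) (ne_of_mem_erase hθ)

/-- Tamo–Barg local recovery: with `(r+1) ∣ q-1`, `H` the group of `(r+1)`-th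
roots of unity, `b ≠ 0`, `β ∈ H`, and `f(x) = Σ_i x^{(r+1)i} f_i(x)` with
`deg f_i ≤ r-1`: the value `f(bβ)` agrees with the degree `≤ r-1` polynomial
`g(x) = Σ_i b^{(r+1)i} f_i(x)` at `bβ`, and consequently `f(bβ)` is determined
by the `r` values `{f(bθ) : θ ∈ H, θ ≠ β}` (any degree `≤ r-1` polynomial
matching `f` there matches at `bβ` too). -/
theorem stmt_11 (F : Type*) [Field F] [Fintype F] (r ℓ : ℕ) (hr : 1 ≤ r)
    (hdvd : (r + 1) ∣ (Fintype.card F - 1))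
    (b : F) (hb : b ≠ 0) (β : F) (hβ : β ^ (r + 1) = 1)
    (fs : Fin (ℓ + 1) → F[X]) (hdeg : ∀ i, (fs i).degree ≤ (r - 1 : ℕ))
    (f : F[X]) (hf : f = ∑ i : Fin (ℓ + 1), X ^ ((r + 1) * (i : ℕ)) * fs i) :
    (f.eval (b * β)
        = (∑ i : Fin (ℓ + 1), C (b ^ ((r + 1) * (i : ℕ))) * fs i).eval (b * β) ∧
      (∑ i : Fin (ℓ + 1), C (b ^ ((r + 1) * (i : ℕ))) * fs i).degree
        ≤ (r - 1 : ℕ)) ∧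
    ∀ g : F[X], g.degree ≤ (r - 1 : ℕ) →
      (∀ θ : F, θ ^ (r + 1) = 1 → θ ≠ β → f.eval (b * θ) = g.eval (b * θ)) →
      f.eval (b * β) = g.eval (b * β) := by
  set G := ∑ i : Fin (ℓ + 1), C (b ^ ((r + 1) * (i : ℕ))) * fs i
  have hfG (θ : F) (hθ : θ ^ (r + 1) = 1) : f.eval (b * θ) = G.eval (b * θ) :=
    hf ▸ eval_sum_X_pow_mul_eq_of_pow_eq _ _ _ (by rw [mul_pow, hθ, mul_one])
  have hGdeg : G.degree ≤ (r - 1 : ℕ) := degree_sum_C_mul_le _ _ fun i _ => hdeg i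
  refine ⟨⟨hfG β hβ, hGdeg⟩, fun g hg hfg => ?_⟩
  have hlt {p : F[X]} (hp : p.degree ≤ (r - 1 : ℕ)) : p.degree < r :=
    hp.trans_lt (by exact_mod_cast Nat.sub_lt hr one_pos)
  obtain ⟨ζ, hζ⟩ := FiniteField.exists_isPrimitiveRoot_of_dvd_card_sub_one hdvd
  have hGg : G = g := eq_of_degree_lt_of_eval_mul_rootsOfUnity_ne hζ hb hβ (hlt hGdeg) (hlt hg)
    fun θ hθ hθβ => (hfG θ hθ).symm.trans (hfg θ hθ hθβ)
  rw [hfG β hβ, hGg]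
end

section
/- The Tamo–Barg code with parameters n = q-1, k = ℓr + a (1 ≤ a ≤ r), locality r, has minimum distance at least n - k + 1 - (⌈k/r⌉ - 1); combined with the LRC Singleton-type bound, its minimum distance equals exactly n - k + 1 - (⌈k/r⌉ - 1). -/
/-!
Every codeword polynomial has degree at most `ℓ(r+1) + a - 1 = k + ⌈k/r⌉ - 2`, so it vanishes
on at most that many points of `Fˣ`; this is the lower bound. For sharpness, the map `u ↦ u^(r+1)`
on the cyclic group `Fˣ` has fibres of size exactly `r+1` over its image. Taking `Φ` vanishing at
`ℓ` points of the image and `p` vanishing at `a - 1` points of one further fibre, the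
codeword `Φ(x^(r+1)) p(x)` vanishes on exactly `ℓ(r+1) + a - 1` units (on all of `Fˣ` when the
image has at most `ℓ` points, in which case the bound is `0`).
-/

open Finset Polynomial

theorem Nat.ceil_mul_add_div_eq_succ {ℓ r a : ℕ} (ha : 1 ≤ a) (har : a ≤ r) :
    ⌈((ℓ * r + a : ℕ) : ℚ) / r⌉₊ = ℓ + 1 := by
  have hr : (0 : ℚ) < r := by exact_mod_cast ha.trans har
  have ha' : (1 : ℚ) ≤ a := by exact_mod_cast ha
  have har' : (a : ℚ) ≤ r := by exact_mod_cast har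
  rw [Nat.ceil_eq_iff (by omega), lt_div_iff₀ hr, div_le_iff₀ hr]
  push_cast
  constructor <;> nlinarith

theorem Polynomial.expand_mul_eq_sum {R : Type*} [CommSemiring R] {Φ : R[X]} {ℓ : ℕ}
    (hΦ : Φ.natDegree ≤ ℓ) (d : ℕ) (p : R[X]) :
    expand R d Φ * p = ∑ i : Fin (ℓ + 1), X ^ (d * (i : ℕ)) * (C (Φ.coeff i) * p) := by
  rw [Fin.sum_univ_eq_sum_range (fun i => X ^ (d * i) * (C (Φ.coeff i) * p)), expand_eq_comp_X_pow,
    comp, eval₂_eq_sum_range' C (Nat.lt_succ_of_le hΦ), sum_mul]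
  refine sum_congr rfl fun i _ => ?_
  rw [pow_mul]
  ring

theorem Polynomial.natDegree_sum_X_pow_mul_le {R : Type*} [Semiring R] {r ℓ a : ℕ}
    (fs : Fin (ℓ + 1) → R[X]) (hlow : ∀ i : Fin (ℓ + 1), (i : ℕ) < ℓ → (fs i).degree ≤ (r - 1 : ℕ))
    (hlast : (fs (Fin.last ℓ)).degree ≤ (a - 1 : ℕ)) :
    (∑ i : Fin (ℓ + 1), X ^ ((r + 1) * (i : ℕ)) * fs i).natDegree ≤ ℓ * (r + 1) + (a - 1) := by
  refine natDegree_sum_le_of_forall_le _ _ fun i _ =>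
    natDegree_mul_le.trans ((Nat.add_le_add_right (natDegree_X_pow_le _) _).trans ?_)
  rcases (Fin.le_last i).lt_or_eq with hi | rfl
  · have hfi := natDegree_le_iff_degree_le.2 (hlow i hi)
    have : (r + 1) * (i : ℕ) + (r + 1) ≤ ℓ * (r + 1) := by
      rw [← Nat.mul_succ, Nat.mul_comm]
      exact Nat.mul_le_mul_right _ hi
    omega
  · have hfi := natDegree_le_iff_degree_le.2 hlast
    rw [Fin.val_last, Nat.mul_comm]
    omega

section CyclicGroup

variable {G : Type*} [CommGroup G] [Fintype G] [DecidableEq G] [IsCyclic G] {d : ℕ}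

theorem IsCyclic.card_filter_pow_eq_pow (hd : d ∣ Fintype.card G) (y : G) :
    #{x : G | x ^ d = y ^ d} = d := by
  have hfib := MonoidHom.card_fiber_eq_of_mem_range (powMonoidHom d : G →* G)
    (⟨y, rfl⟩ : y ^ d ∈ Set.range (powMonoidHom d : G →* G)) ⟨1, one_pow d⟩
  have hker := IsCyclic.card_powMonoidHom_ker G d
  rw [Nat.card_eq_fintype_card (α := G), Nat.gcd_eq_right hd] at hker
  simp only [powMonoidHom_apply] at hfib
  rw [hfib, ← Fintype.card_subtype, ← Nat.card_eq_fintype_card]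
  exact hker

theorem IsCyclic.card_image_pow_mul (hd : d ∣ Fintype.card G) :
    #(univ.image fun x : G => x ^ d) * d = Fintype.card G := by
  rw [← card_univ, card_eq_sum_card_image (fun x : G => x ^ d) univ, ← smul_eq_mul,
    ← sum_const]
  refine sum_congr rfl fun b hb => ?_
  obtain ⟨y, -, rfl⟩ := mem_image.1 hb
  exact (IsCyclic.card_filter_pow_eq_pow hd y).symm

/-- The fibres of `x ↦ x ^ d` over `B`, together with `Γ`, form a set of `#B * d + #Γ` elements. -/
theorem IsCyclic.exists_finset_pow_mem_card_eq {e : ℕ} (hd : d ∣ Fintype.card G) (he : e ≤ d)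
    (ℓ : ℕ) :
    ∃ B Γ : Finset G, (∀ b ∈ B, ∃ y, y ^ d = b) ∧ (∀ u ∈ Γ, u ^ d ∉ B) ∧ #B ≤ ℓ ∧ #Γ ≤ e ∧
      #B * d + #Γ = min (ℓ * d + e) (Fintype.card G) := by
  set P := univ.image fun x : G => x ^ d
  have hP : #P * d = Fintype.card G := IsCyclic.card_image_pow_mul hd
  have hPpow : ∀ b ∈ P, ∃ y, y ^ d = b := fun b hb => by simpa [P] using hb
  rcases lt_or_ge ℓ #P with hℓ | hℓ
  · obtain ⟨B, hBP, hB⟩ := exists_subset_card_eq hℓ.le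
    obtain ⟨β, hβP, hβB⟩ := exists_mem_notMem_of_card_lt_card (hB ▸ hℓ)
    obtain ⟨y, rfl⟩ := hPpow β hβP
    obtain ⟨Γ, hΓ, hΓe⟩ := exists_subset_card_eq
      (show e ≤ #{x : G | x ^ d = y ^ d} by rw [IsCyclic.card_filter_pow_eq_pow hd y]; exact he)
    refine ⟨B, Γ, fun b hb => hPpow b (hBP hb), fun u hu => ?_, hB.le, hΓe.le, ?_⟩
    · rw [(mem_filter.1 (hΓ hu)).2]
      exact hβB
    · have : (ℓ + 1) * d ≤ #P * d := Nat.mul_le_mul_right _ hℓ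
      rw [Nat.succ_mul] at this
      rw [hB, hΓe, min_eq_left (by omega)]
  · refine ⟨P, ∅, hPpow, by simp, hℓ, by simp, ?_⟩
    have : #P * d ≤ ℓ * d := Nat.mul_le_mul_right _ hℓ
    rw [card_empty, add_zero, hP, min_eq_right (by omega)]

end CyclicGroup

theorem Lagrange.eval_nodal_units_eq_zero_iff {F : Type*} [Field F] (s : Finset Fˣ) (v : Fˣ) :
    (nodal s Units.val).eval (v : F) = 0 ↔ v ∈ s := by
  simp [eval_nodal, prod_eq_zero_iff, sub_eq_zero, Units.val_inj]

section FiniteField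

variable {F : Type*} [Field F] [Fintype F] [DecidableEq F]

theorem Polynomial.card_units_eval_eq_zero_le {f : F[X]} (hf : f ≠ 0) :
    #{u : Fˣ | f.eval ↑u = 0} ≤ f.natDegree := by
  rw [← card_map ⟨((↑) : Fˣ → F), Units.val_injective⟩]
  refine card_le_degree_of_subset_roots fun x hx => ?_
  obtain ⟨u, hu, rfl⟩ := mem_map.1 hx
  exact (mem_roots hf).2 (mem_filter.1 hu).2

theorem Polynomial.card_units_eval_ne_zero (f : F[X]) :
    #{u : Fˣ | f.eval ↑u ≠ 0} = (Fintype.card F - 1) - #{u : Fˣ | f.eval ↑u = 0} := by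
  have := card_filter_add_card_filter_not (s := (univ : Finset Fˣ)) (fun u => f.eval ↑u = 0)
  rw [card_univ, Fintype.card_units] at this
  simp only [ne_eq]
  omega

open Lagrange in
theorem card_units_eval_expand_nodal_mul_nodal_eq_zero {d : ℕ} (hd : d ∣ Fintype.card F - 1)
    {B Γ : Finset Fˣ} (hB : ∀ b ∈ B, ∃ y, y ^ d = b) (hΓ : ∀ u ∈ Γ, u ^ d ∉ B) :
    #{u : Fˣ | (expand F d (nodal B Units.val) * nodal Γ Units.val).eval ↑u = 0} =
      #B * d + #Γ := by
  have hzeros :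
      ({u | (expand F d (nodal B Units.val) * nodal Γ Units.val).eval ↑u = 0} : Finset Fˣ) =
        ({u | u ^ d ∈ B} : Finset Fˣ) ∪ Γ := by
    ext u
    simp only [mem_filter, mem_univ, true_and, mem_union, eval_mul, expand_eval, mul_eq_zero,
      ← Units.val_pow_eq_pow_val, eval_nodal_units_eq_zero_iff]
  have hfib : #{u : Fˣ | u ^ d ∈ B} = #B * d := by
    rw [card_eq_sum_card_fiberwise (s := {u : Fˣ | u ^ d ∈ B}) (t := B)
      (fun u hu => (mem_filter.1 hu).2), sum_const_nat]
    intro b hb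
    obtain ⟨y, rfl⟩ := hB b hb
    rw [filter_filter, filter_congr fun u _ => and_iff_right_of_imp fun h => h ▸ hb]
    exact IsCyclic.card_filter_pow_eq_pow (Fintype.card_units (α := F) ▸ hd) y
  rw [hzeros, card_union_of_disjoint
    (disjoint_left.2 fun u hu hu' => hΓ u hu' (mem_filter.1 hu).2), hfib]

open Lagrange in
theorem exists_expand_mul_card_units_eval_ne_zero {d e : ℕ} (hd : d ∣ Fintype.card F - 1)
    (he : e ≤ d) (ℓ : ℕ) :
    ∃ Φ p : F[X], Φ.natDegree ≤ ℓ ∧ p.natDegree ≤ e ∧ expand F d Φ * p ≠ 0 ∧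
      #{u : Fˣ | (expand F d Φ * p).eval ↑u ≠ 0} = (Fintype.card F - 1) - (ℓ * d + e) := by
  obtain ⟨B, Γ, hB, hΓ, hBℓ, hΓe, hcard⟩ :=
    IsCyclic.exists_finset_pow_mem_card_eq (Fintype.card_units (α := F) ▸ hd) he ℓ
  have hd0 : 0 < d := Nat.pos_of_dvd_of_pos hd (Nat.sub_pos_of_lt Fintype.one_lt_card)
  refine ⟨nodal B Units.val, nodal Γ Units.val, natDegree_nodal.trans_le hBℓ,
    natDegree_nodal.trans_le hΓe, mul_ne_zero ((expand_ne_zero hd0).2 nodal_ne_zero) nodal_ne_zero,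
    ?_⟩
  rw [card_units_eval_ne_zero, card_units_eval_expand_nodal_mul_nodal_eq_zero hd hB hΓ, hcard,
    Fintype.card_units]
  omega

end FiniteField

theorem stmt_12_general (F : Type*) [Field F] [Fintype F] [DecidableEq F]
    (r ℓ a n k : ℕ) (ha1 : 1 ≤ a) (har : a ≤ r)
    (hdvd : (r + 1) ∣ (Fintype.card F - 1))
    (hn : n = Fintype.card F - 1) (hk : k = ℓ * r + a) :
    (∀ f : F[X], ∀ fs : Fin (ℓ + 1) → F[X],
        (∀ i : Fin (ℓ + 1), (i : ℕ) < ℓ → (fs i).degree ≤ (r - 1 : ℕ)) →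
        (fs (Fin.last ℓ)).degree ≤ (a - 1 : ℕ) →
        f = ∑ i : Fin (ℓ + 1), X ^ ((r + 1) * (i : ℕ)) * fs i →
        f ≠ 0 →
        n - k + 1 - (⌈(k : ℚ) / r⌉₊ - 1)
          ≤ (univ.filter fun u : Fˣ => f.eval (u : F) ≠ 0).card) ∧
    (∃ f : F[X], ∃ fs : Fin (ℓ + 1) → F[X],
        (∀ i : Fin (ℓ + 1), (i : ℕ) < ℓ → (fs i).degree ≤ (r - 1 : ℕ)) ∧
        (fs (Fin.last ℓ)).degree ≤ (a - 1 : ℕ) ∧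
        f = ∑ i : Fin (ℓ + 1), X ^ ((r + 1) * (i : ℕ)) * fs i ∧
        f ≠ 0 ∧
        (univ.filter fun u : Fˣ => f.eval (u : F) ≠ 0).card
          = n - k + 1 - (⌈(k : ℚ) / r⌉₊ - 1)) := by
  have hrn : r + 1 ≤ n := hn ▸ Nat.le_of_dvd (Nat.sub_pos_of_lt Fintype.one_lt_card) hdvd
  have hbound : n - k + 1 - (⌈(k : ℚ) / r⌉₊ - 1) = n - (ℓ * (r + 1) + (a - 1)) := by
    rw [hk, Nat.ceil_mul_add_div_eq_succ ha1 har, Nat.mul_succ]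
    -- the truncated subtraction `n - k` is harmless: either `ℓ ≥ 1`, or `k = a ≤ r < n`
    rcases Nat.eq_zero_or_pos ℓ with rfl | hℓ
    · simp only [zero_mul, zero_add]
      omega
    · generalize ℓ * r = t
      omega
  rw [hbound, hn]
  constructor
  · rintro f fs hlow hlast rfl hf
    have := (card_units_eval_eq_zero_le hf).trans (natDegree_sum_X_pow_mul_le fs hlow hlast)
    rw [card_units_eval_ne_zero]
    omega
  · obtain ⟨Φ, p, hΦ, hp, hne, hcard⟩ :=
      exists_expand_mul_card_units_eval_ne_zero hdvd (show a - 1 ≤ r + 1 by omega) ℓ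
    have hblock : ∀ i : Fin (ℓ + 1), (C (Φ.coeff i) * p).degree ≤ (a - 1 : ℕ) := fun i =>
      natDegree_le_iff_degree_le.1 ((natDegree_C_mul_le _ _).trans hp)
    refine ⟨_, fun i => C (Φ.coeff i) * p, fun i _ => (hblock i).trans (by exact_mod_cast Nat.sub_le_sub_right har 1),
      hblock _, expand_mul_eq_sum hΦ (r + 1) p, hne, hcard⟩

/-- The Tamo–Barg code `{(f(u))_{u ∈ F_q^*} : f ∈ Q}` with `n = q-1`,
`k = ℓr + a` (`1 ≤ a ≤ r`), `(r+1) ∣ q-1`, where `Q` consists of polynomials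
`f = Σ_{i≤ℓ} x^{(r+1)i} f_i(x)` with `deg f_i ≤ r-1` for `i < ℓ` and
`deg f_ℓ ≤ a-1`, has minimum distance exactly `n - k + 1 - (⌈k/r⌉ - 1)`:
every nonzero codeword has at least that weight, and some nonzero codeword has
exactly that weight. -/
theorem stmt_12 (F : Type*) [Field F] [Fintype F] [DecidableEq F]
    (r ℓ a n k : ℕ) (hr : 1 ≤ r) (ha1 : 1 ≤ a) (har : a ≤ r)
    (hdvd : (r + 1) ∣ (Fintype.card F - 1))
    (hn : n = Fintype.card F - 1) (hk : k = ℓ * r + a) :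
    (∀ f : F[X], ∀ fs : Fin (ℓ + 1) → F[X],
        (∀ i : Fin (ℓ + 1), (i : ℕ) < ℓ → (fs i).degree ≤ (r - 1 : ℕ)) →
        (fs (Fin.last ℓ)).degree ≤ (a - 1 : ℕ) →
        f = ∑ i : Fin (ℓ + 1), X ^ ((r + 1) * (i : ℕ)) * fs i →
        f ≠ 0 →
        n - k + 1 - (⌈(k : ℚ) / r⌉₊ - 1)
          ≤ (univ.filter fun u : Fˣ => f.eval (u : F) ≠ 0).card) ∧
    (∃ f : F[X], ∃ fs : Fin (ℓ + 1) → F[X],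
        (∀ i : Fin (ℓ + 1), (i : ℕ) < ℓ → (fs i).degree ≤ (r - 1 : ℕ)) ∧
        (fs (Fin.last ℓ)).degree ≤ (a - 1 : ℕ) ∧
        f = ∑ i : Fin (ℓ + 1), X ^ ((r + 1) * (i : ℕ)) * fs i ∧
        f ≠ 0 ∧
        (univ.filter fun u : Fˣ => f.eval (u : F) ≠ 0).card
          = n - k + 1 - (⌈(k : ℚ) / r⌉₊ - 1)) :=
  stmt_12_general F r ℓ a n k ha1 har hdvd hn hk
end
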